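/- If every tuple of a sequence T belongs to a single piece P (a maximal contiguous subsequence monotone within Δ) of length m, and OPT(i) denotes the optimal constrained gain on the prefix T[i] where the last i indices lie in P, then for 1 ≤ k ≤ m-1 one has OPT(i) - OPT(i-k) > k^2; consequently no optimal segmentation splits the piece P. -/
import Mathlib


/-- A monotonic band of length `k` inside the interval `[a, b)`. -/
def IsBandOn (t : ℕ → ℝ) (Δ : ℝ) (a b k : ℕ) (f : Fin k → ℕ) : Prop :=
  StrictMono f ∧ (∀ j, a ≤ f j ∧ f j < b) ∧
    ∀ i j : Fin k, i < j → t (f i) - t (f j) ≤ Δ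

/-- The length of a longest monotonic band in the segment `[a, b)`. -/
noncomputable def lmbLenOn (t : ℕ → ℝ) (Δ : ℝ) (a b : ℕ) : ℕ :=
  sSup { k : ℕ | ∃ f : Fin k → ℕ, IsBandOn t Δ a b k f }

/-- The gain of the segment `[a, b)`: `(|LMB| - |outliers|)·|S| = (2·|LMB| - |S|)·|S|`. -/
noncomputable def gainOn (t : ℕ → ℝ) (Δ : ℝ) (a b : ℕ) : ℤ :=
  (2 * (lmbLenOn t Δ a b : ℤ) - ((b - a : ℕ) : ℤ)) * ((b - a : ℕ) : ℤ)

/-- `OPT i`: the optimal total gain over contiguous segmentations of the prefix `[0, i)`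
(within a single piece there are no outliers, so every segmentation is feasible). -/
noncomputable def OPT (t : ℕ → ℝ) (Δ : ℝ) (i : ℕ) : ℤ :=
  sSup { g : ℤ | ∃ (m : ℕ) (c : Fin (m + 1) → ℕ), StrictMono c ∧
    c 0 = 0 ∧ c (Fin.last m) = i ∧
    g = ∑ k : Fin m, gainOn t Δ (c k.castSucc) (c k.succ) }

lemma band_card_le {t : ℕ → ℝ} {Δ : ℝ} {a b k : ℕ} {f : Fin k → ℕ}
    (h : IsBandOn t Δ a b k f) : k ≤ b - a := by
  obtain ⟨hmono, hrange, -⟩ := h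
  have := Finset.card_le_card_of_injOn (s := (Finset.univ : Finset (Fin k)))
    (t := Finset.Ico a b) f
    (fun j _ => Finset.mem_Ico.2 (hrange j)) hmono.injective.injOn
  simpa using this

lemma lmb_eq {t : ℕ → ℝ} {Δ : ℝ} {m : ℕ}
    (hpiece : ∀ a b : ℕ, a < b → b < m → t a - t b ≤ Δ)
    {a b : ℕ} (hb : b ≤ m) : lmbLenOn t Δ a b = b - a := by
  have hband : IsBandOn t Δ a b (b - a) (fun j => a + j.val) := by
    refine ⟨?_, ?_, ?_⟩
    · intro x y hxy
      have hxy' : x.val < y.val := hxy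
      show a + x.val < a + y.val
      omega
    · intro j
      have := j.isLt
      show a ≤ a + j.val ∧ a + j.val < b
      omega
    · intro x y hxy
      have hx := x.isLt; have hy := y.isLt
      have hxy' : x.val < y.val := hxy
      show t (a + x.val) - t (a + y.val) ≤ Δ
      exact hpiece _ _ (by omega) (by omega)
  apply le_antisymm
  · refine csSup_le ⟨b - a, _, hband⟩ ?_
    rintro k ⟨f, hf⟩
    exact band_card_le hf
  · refine le_csSup ⟨b - a, ?_⟩ ⟨_, hband⟩
    rintro k ⟨f, hf⟩
    exact band_card_le hf

lemma gain_sq {t : ℕ → ℝ} {Δ : ℝ} {m : ℕ}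
    (hpiece : ∀ a b : ℕ, a < b → b < m → t a - t b ≤ Δ)
    {a b : ℕ} (hb : b ≤ m) : gainOn t Δ a b = ((b - a : ℕ) : ℤ) ^ 2 := by
  unfold gainOn
  rw [lmb_eq hpiece hb]
  ring

lemma sum_sq_le_sq_sum {ι : Type*} (s : Finset ι) (f : ι → ℤ)
    (h : ∀ i ∈ s, 0 ≤ f i) : (∑ i ∈ s, f i ^ 2) ≤ (∑ i ∈ s, f i) ^ 2 := by
  induction s using Finset.cons_induction with
  | empty => simp
  | cons a s ha ih =>
    simp only [Finset.sum_cons]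
    have h1 := h a (Finset.mem_cons_self a s)
    have h2 : ∀ i ∈ s, 0 ≤ f i := fun i hi => h i (Finset.mem_cons_of_mem hi)
    have h3 : (0 : ℤ) ≤ ∑ i ∈ s, f i := Finset.sum_nonneg h2
    nlinarith [ih h2]

lemma sum_sq_lt_sq_sum {ι : Type*} [DecidableEq ι] (s : Finset ι) (f : ι → ℤ)
    (h : ∀ i ∈ s, 1 ≤ f i) (hc : 2 ≤ s.card) :
    (∑ i ∈ s, f i ^ 2) < (∑ i ∈ s, f i) ^ 2 := by
  obtain ⟨a, ha⟩ : s.Nonempty := Finset.card_pos.mp (by omega)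
  have hsplit : f a + ∑ i ∈ s.erase a, f i = ∑ i ∈ s, f i :=
    Finset.add_sum_erase s f ha
  have hsplit2 : f a ^ 2 + ∑ i ∈ s.erase a, f i ^ 2 = ∑ i ∈ s, f i ^ 2 :=
    Finset.add_sum_erase s (fun i => f i ^ 2) ha
  have hcard : 1 ≤ (s.erase a).card := by
    have := Finset.card_erase_of_mem ha; omega
  have hs' : ∀ i ∈ s.erase a, 1 ≤ f i := fun i hi => h i (Finset.mem_of_mem_erase hi)
  have hsum1 : (1 : ℤ) ≤ ∑ i ∈ s.erase a, f i := by
    calc (1 : ℤ) = (1 : ℕ) • (1 : ℤ) := by simp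
    _ ≤ (s.erase a).card • (1 : ℤ) := by
        exact nsmul_le_nsmul_left (by norm_num) hcard
    _ ≤ ∑ i ∈ s.erase a, f i := Finset.card_nsmul_le_sum _ _ _ hs'
  have hle := sum_sq_le_sq_sum (s.erase a) f (fun i hi => le_trans zero_le_one (hs' i hi))
  have h1 := h a ha
  nlinarith

lemma seg_decomp {t : ℕ → ℝ} {Δ : ℝ} {m : ℕ}
    (hpiece : ∀ a b : ℕ, a < b → b < m → t a - t b ≤ Δ)
    {i p : ℕ} (c : Fin (p + 1) → ℕ) (hmono : StrictMono c)
    (h0 : c 0 = 0) (hl : c (Fin.last p) = i) (hi : i ≤ m) :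
    ∃ d : ℕ → ℤ,
      (∑ k : Fin p, gainOn t Δ (c k.castSucc) (c k.succ)) = ∑ n ∈ Finset.range p, d n ^ 2 ∧
      (∑ n ∈ Finset.range p, d n) = (i : ℤ) ∧
      ∀ n ∈ Finset.range p, 1 ≤ d n := by
  set C : ℕ → ℕ := fun n => c ⟨min n p, by omega⟩ with hC
  refine ⟨fun n => (C (n + 1) : ℤ) - (C n : ℤ), ?_, ?_, ?_⟩
  · have hconv : (∑ k : Fin p, gainOn t Δ (c k.castSucc) (c k.succ))
        = ∑ k : Fin p, (fun n => gainOn t Δ (C n) (C (n + 1))) k.val := by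
      refine Finset.sum_congr rfl (fun k _ => ?_)
      have h1 : C k.val = c k.castSucc := by
        simp only [hC]
        congr 1
        exact Fin.ext (by simp [Nat.min_eq_left (le_of_lt k.isLt)])
      have h2 : C (k.val + 1) = c k.succ := by
        simp only [hC]
        congr 1
        exact Fin.ext (by simp [Nat.min_eq_left (Nat.succ_le_of_lt k.isLt)])
      dsimp only
      rw [h1, h2]
    rw [hconv]
    rw [Fin.sum_univ_eq_sum_range (fun n => gainOn t Δ (C n) (C (n + 1))) p]
    refine Finset.sum_congr rfl (fun n hn => ?_)
    dsimp only
    have hnp := Finset.mem_range.mp hn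
    have hCm : C (n + 1) ≤ m := by
      calc C (n + 1) ≤ c (Fin.last p) := hmono.monotone (Fin.le_last _)
      _ ≤ m := by rw [hl]; exact hi
    have hle : C n ≤ C (n + 1) := by
      apply hmono.monotone
      show (⟨min n p, _⟩ : Fin (p+1)) ≤ ⟨min (n+1) p, _⟩
      simp only [Fin.mk_le_mk]
      omega
    rw [gain_sq hpiece hCm]
    rw [Nat.cast_sub hle]
  · have htel : (∑ n ∈ Finset.range p, ((fun n => (C n : ℤ)) (n + 1) - (fun n => (C n : ℤ)) n))
        = (C p : ℤ) - (C 0 : ℤ) := Finset.sum_range_sub (fun n => (C n : ℤ)) p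
    simp only [] at htel
    rw [htel]
    have hCp : C p = i := by
      simp only [hC]
      rw [show (⟨min p p, _⟩ : Fin (p+1)) = Fin.last p from Fin.ext (by simp), hl]
    have hC0 : C 0 = 0 := by
      simp only [hC]
      rw [show (⟨min 0 p, _⟩ : Fin (p+1)) = 0 from Fin.ext (by simp), h0]
    rw [hCp, hC0]
    simp
  · intro n hn
    have hnp := Finset.mem_range.mp hn
    have hlt : C n < C (n + 1) := by
      apply hmono
      show (⟨min n p, _⟩ : Fin (p+1)) < ⟨min (n+1) p, _⟩
      simp only [Fin.mk_lt_mk]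
      omega
    have hlt' : (C n : ℤ) < (C (n + 1) : ℤ) := by exact_mod_cast hlt
    dsimp only
    omega

lemma OPT_eq {t : ℕ → ℝ} {Δ : ℝ} {m : ℕ}
    (hpiece : ∀ a b : ℕ, a < b → b < m → t a - t b ≤ Δ)
    {i : ℕ} (hi1 : 1 ≤ i) (hi : i ≤ m) : OPT t Δ i = (i : ℤ) ^ 2 := by
  unfold OPT
  have hmem : (i : ℤ) ^ 2 ∈ {g : ℤ | ∃ (p : ℕ) (c : Fin (p + 1) → ℕ), StrictMono c ∧
      c 0 = 0 ∧ c (Fin.last p) = i ∧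
      g = ∑ k : Fin p, gainOn t Δ (c k.castSucc) (c k.succ)} := by
    refine ⟨1, ![0, i], ?_, rfl, rfl, ?_⟩
    · intro a b hab
      fin_cases a <;> fin_cases b <;> simp_all <;> omega
    · have e1 : (![0, i] : Fin 2 → ℕ) ((0 : Fin 1).castSucc) = 0 := rfl
      have e2 : (![0, i] : Fin 2 → ℕ) ((0 : Fin 1).succ) = i := rfl
      rw [Fin.sum_univ_one, e1, e2, gain_sq hpiece hi]
      simp
  have hub : ∀ g ∈ {g : ℤ | ∃ (p : ℕ) (c : Fin (p + 1) → ℕ), StrictMono c ∧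
      c 0 = 0 ∧ c (Fin.last p) = i ∧
      g = ∑ k : Fin p, gainOn t Δ (c k.castSucc) (c k.succ)}, g ≤ (i : ℤ) ^ 2 := by
    rintro g ⟨p, c, hc, h0, hl, rfl⟩
    obtain ⟨d, hsum, hstot, hd1⟩ := seg_decomp hpiece c hc h0 hl hi
    rw [hsum, ← hstot]
    exact sum_sq_le_sq_sum _ _ (fun n hn => le_trans zero_le_one (hd1 n hn))
  exact le_antisymm (csSup_le ⟨_, hmem⟩ hub) (le_csSup ⟨(i : ℤ) ^ 2, hub⟩ hmem)

/-- if the whole sequence `(t 0, …, t (m-1))` is a single piece of length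
`m` (monotone within `Δ`), then for `1 ≤ k ≤ m - 1` one has `OPT m - OPT (m-k) > k²`;
consequently no segmentation splitting the piece into two or more segments is optimal. -/
theorem stmt_18 (t : ℕ → ℝ) (Δ : ℝ) (hΔ : 0 ≤ Δ) (m : ℕ) (hm : 2 ≤ m)
    (hpiece : ∀ a b : ℕ, a < b → b < m → t a - t b ≤ Δ) :
    (∀ k : ℕ, 1 ≤ k → k ≤ m - 1 → OPT t Δ m - OPT t Δ (m - k) > (k : ℤ) ^ 2) ∧
    (∀ (p : ℕ) (c : Fin (p + 1) → ℕ), StrictMono c → c 0 = 0 → c (Fin.last p) = m →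
      2 ≤ p → (∑ k : Fin p, gainOn t Δ (c k.castSucc) (c k.succ)) < OPT t Δ m) := by
  constructor
  · intro k hk1 hk2
    have h1 : OPT t Δ m = (m : ℤ) ^ 2 := OPT_eq hpiece (by omega) le_rfl
    have h2 : OPT t Δ (m - k) = ((m - k : ℕ) : ℤ) ^ 2 :=
      OPT_eq hpiece (by omega) (by omega)
    rw [h1, h2]
    have hcast : ((m - k : ℕ) : ℤ) = (m : ℤ) - (k : ℤ) := by omega
    have hk1' : (1 : ℤ) ≤ (k : ℤ) := by exact_mod_cast hk1
    have hk2' : (k : ℤ) + 1 ≤ (m : ℤ) := by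
      have : k + 1 ≤ m := by omega
      exact_mod_cast this
    rw [hcast]
    nlinarith
  · intro p c hc h0 hl hp
    have h1 : OPT t Δ m = (m : ℤ) ^ 2 := OPT_eq hpiece (by omega) le_rfl
    obtain ⟨d, hsum, hstot, hd1⟩ := seg_decomp hpiece c hc h0 hl le_rfl
    rw [h1, hsum, ← hstot]
    exact sum_sq_lt_sq_sum _ _ hd1 (by simpa using hp)
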